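/- arXiv:0806.1981 — 3 statements merged into one kernel-verified Lean document; each statement's English description precedes it below -/
import Mathlib

section
/- Let e₁,...,e₆ ∈ ℚ⁶ be vectors with eᵢ = εᵢ − (1/6)∑ⱼεⱼ (so ∑eᵢ = 0), and let M = {eᵢ + eⱼ + e_k : 1 ≤ i < j < k ≤ 6}. Then for any 5 linearly independent vectors v₁, ..., v₅ ∈ M, the subgroup ℤ(v₁,...,v₅) equals {∑ᵢ xᵢeᵢ : xᵢ ∈ ℤ, ∑xᵢ ≡ 0 (mod 3)}. -/
/-- The quasi-basis vectors `eᵢ = εᵢ − (1/6)∑ⱼ εⱼ` in `ℚ⁶`; they satisfy `∑ᵢ eᵢ = 0`. -/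
def e (i : Fin 6) : Fin 6 → ℚ :=
  fun j => (if j = i then 1 else 0) - 1 / 6

/-!
Up to sign, each element of `M` is `e₀ + e_{x+1} + e_{y+1}` for an edge `{x, y}` of the complete
graph on `Fin 5`, since a triple and its complement give opposite vectors; so the `vₗ` define a
graph `G` on `Fin 5`. Alternating sums of the `vₗ` along a walk from `x` to `y` lie in their
ℤ-span and equal `e_{x+1} - e_{y+1}` or `e₀ + e_{x+1} + e_{y+1}` according to the parity of the
length, and the vectors `e₀ + e_{x+1} + e_{y+1}` (all `x, y`, including `x = y`) generate the
mod-3 lattice. So it suffices to join any two vertices by an odd walk.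

If a vertex `b` lies on no odd closed walk, `φ x = [even walk b → x] - [odd walk b → x]` satisfies
`φ x + φ y = 0` on edges and `φ b = 1`; it induces a linear functional killing every `vₗ` but not
`e₀ + 2e_{b+1}`, and together with the coordinate sum this leaves no room for five independent
vectors in `ℚ⁶`. Hence every vertex lies on an odd closed walk, which visits at least three
vertices; two components would need six, so `G` is connected.
-/

open Finset SimpleGraph

namespace SimpleGraph

variable {V : Type*} {G : SimpleGraph V}

namespace Walk

theorem sub_mem_of_even_and_add_mem_of_odd {M σ : Type*} [AddCommGroup M] [SetLike σ M]
    [AddSubgroupClass σ M] {S : σ} (f : V → M) (c : M)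
    (hS : ∀ x y, G.Adj x y → c + f x + f y ∈ S) :
    ∀ {x y : V} (p : G.Walk x y),
      (Even p.length → f x - f y ∈ S) ∧ (Odd p.length → c + f x + f y ∈ S)
  | _, _, nil => ⟨fun _ => by simp [zero_mem], by simp⟩
  | x, y, cons (v := z) h p => by
    obtain ⟨ih_even, ih_odd⟩ := sub_mem_of_even_and_add_mem_of_odd f c hS p
    rw [length_cons, Nat.even_add_one, Nat.odd_add_one, Nat.not_even_iff_odd]
    refine ⟨fun hp => ?_, fun hp => ?_⟩
    · have := sub_mem (hS x z h) (ih_odd hp)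
      rwa [show c + f x + f z - (c + f z + f y) = f x - f y by abel] at this
    · have := sub_mem (hS x z h) (ih_even (Nat.not_odd_iff_even.1 hp))
      rwa [show c + f x + f z - (f z - f y) = c + f x + f y by abel] at this

theorem even_length_iff_eq_of_support_subset {a b : V} :
    ∀ {u v : V} (p : G.Walk u v), (∀ z ∈ p.support, z = a ∨ z = b) → (Even p.length ↔ u = v)
  | _, _, nil, _ => by simp
  | u, v, cons (v := w) h p, hp => by
    have ih := even_length_iff_eq_of_support_subset p fun z hz => hp z (by simp [hz])
    have hu := hp u (by simp)
    have hw := hp w (by simp)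
    have hv := hp v (by simp)
    have := h.ne
    rw [length_cons, Nat.even_add_one, ih]
    grind

theorem exists_mem_support_ne_ne {u : V} (p : G.Walk u u) (hp : Odd p.length) (y : V) :
    ∃ z ∈ p.support, z ≠ u ∧ z ≠ y := by
  by_contra! h
  refine Nat.not_even_iff_odd.2 hp
    ((p.even_length_iff_eq_of_support_subset (a := u) (b := y) fun z hz => ?_).2 rfl)
  by_cases hzu : z = u
  · exact Or.inl hzu
  · exact Or.inr (h z hz hzu)

end Walk

theorem preconnected_of_card_lt_six [Fintype V] (hV : Fintype.card V < 6)
    (hodd : ∀ u, ∃ p : G.Walk u u, Odd p.length) : G.Preconnected := by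
  classical
  have three_le : ∀ u, 3 ≤ #(univ.filter (G.Reachable u)) := fun u => by
    obtain ⟨p, hp⟩ := hodd u
    obtain ⟨z₁, hz₁, hz₁u, -⟩ := p.exists_mem_support_ne_ne hp u
    obtain ⟨z₂, hz₂, hz₂u, hz₂z₁⟩ := p.exists_mem_support_ne_ne hp z₁
    exact two_lt_card.2 ⟨u, by simp, z₁, by simpa using ⟨p.takeUntil z₁ hz₁⟩, z₂,
      by simpa using ⟨p.takeUntil z₂ hz₂⟩, hz₁u.symm, hz₂u.symm, hz₂z₁.symm⟩
  intro b d
  by_contra hbd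
  have hdisj : Disjoint (univ.filter (G.Reachable b)) (univ.filter (G.Reachable d)) :=
    disjoint_filter.2 fun z _ hb hd => hbd (hb.trans hd.symm)
  have := card_union_of_disjoint hdisj ▸ card_le_univ (_ ∪ _)
  have := three_le b
  have := three_le d
  omega

open Classical in
noncomputable def parityPotential (G : SimpleGraph V) (b x : V) : ℚ :=
  (if ∃ p : G.Walk b x, Even p.length then 1 else 0) -
    (if ∃ p : G.Walk b x, Odd p.length then 1 else 0)

theorem exists_odd_walk_of_adj {b x y : V} (h : G.Adj x y) :
    (∃ p : G.Walk b x, Even p.length) → ∃ q : G.Walk b y, Odd q.length :=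
  fun ⟨p, hp⟩ => ⟨p.concat h, by simpa [Walk.length_concat] using hp.add_one⟩

theorem exists_even_walk_of_adj {b x y : V} (h : G.Adj x y) :
    (∃ p : G.Walk b x, Odd p.length) → ∃ q : G.Walk b y, Even q.length :=
  fun ⟨p, hp⟩ => ⟨p.concat h, by simpa [Walk.length_concat] using hp.add_one⟩

theorem parityPotential_add_eq_zero {b x y : V} (h : G.Adj x y) :
    G.parityPotential b x + G.parityPotential b y = 0 := by
  have hx : (∃ p : G.Walk b x, Even p.length) ↔ ∃ q : G.Walk b y, Odd q.length :=
    ⟨exists_odd_walk_of_adj h, exists_even_walk_of_adj h.symm⟩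
  have hy : (∃ p : G.Walk b x, Odd p.length) ↔ ∃ q : G.Walk b y, Even q.length :=
    ⟨exists_even_walk_of_adj h, exists_odd_walk_of_adj h.symm⟩
  unfold parityPotential
  split_ifs <;> grind

theorem parityPotential_self {b : V} (hb : ∀ p : G.Walk b b, ¬Odd p.length) :
    G.parityPotential b b = 1 := by
  simp [parityPotential, hb]

end SimpleGraph

theorem notMem_span_of_map_eq_zero {K V W ι : Type*} [Semiring K] [AddCommMonoid V] [Module K V]
    [AddCommMonoid W] [Module K W] {v : ι → V} (f : V →ₗ[K] W) (hv : ∀ i, f (v i) = 0)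
    {x : V} (hx : f x ≠ 0) : x ∉ Submodule.span K (Set.range v) := fun hmem =>
  hx <| (Submodule.span_le (p := LinearMap.ker f)).2 (Set.range_subset_iff.2 hv) hmem

theorem sum_e : ∑ i, e i = 0 := by
  ext j
  simp [e, sum_sub_distrib]

theorem sum_e_succ : ∑ x : Fin 5, e x.succ = -e 0 := by
  rw [eq_neg_iff_add_eq_zero, add_comm, ← Fin.sum_univ_succ (f := e), sum_e]

def edgeVec (x y : Fin 5) : Fin 6 → ℚ := e 0 + e x.succ + e y.succ

theorem edgeVec_comm (x y : Fin 5) : edgeVec x y = edgeVec y x := by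
  simp only [edgeVec, add_right_comm]

theorem exists_edgeVec_eq (i j k : Fin 6) (hij : i < j) (hjk : j < k) :
    ∃ x y : Fin 5, x ≠ y ∧ (e i + e j + e k = edgeVec x y ∨ e i + e j + e k = -edgeVec x y) := by
  by_cases hi : i = 0
  · subst hi
    obtain ⟨x, rfl⟩ := Fin.exists_succ_eq.2 hij.ne'
    obtain ⟨y, rfl⟩ := Fin.exists_succ_eq.2 (hij.trans hjk).ne'
    exact ⟨x, y, fun h => hjk.ne (congrArg Fin.succ h), Or.inl rfl⟩
  have hi : 0 < i := Fin.pos_of_ne_zero hi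
  set T : Finset (Fin 6) := {i, j, k}
  have h0 : (0 : Fin 6) ∈ Tᶜ := by
    simp [T, hi.ne, (hi.trans hij).ne, (hi.trans (hij.trans hjk)).ne]
  have hcard : #(Tᶜ.erase 0) = 2 := by
    rw [card_erase_of_mem h0, card_compl,
      card_eq_three.2 ⟨i, j, k, hij.ne, (hij.trans hjk).ne, hjk.ne, rfl⟩]
    rfl
  obtain ⟨a, b, hab, hTab⟩ := card_eq_two.1 hcard
  have hne0 : a ≠ 0 ∧ b ≠ 0 := by
    constructor <;> exact (mem_erase.1 (hTab ▸ by simp : _ ∈ Tᶜ.erase 0)).1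
  obtain ⟨x, rfl⟩ := Fin.exists_succ_eq.2 hne0.1
  obtain ⟨y, rfl⟩ := Fin.exists_succ_eq.2 hne0.2
  refine ⟨x, y, fun h => hab (congrArg Fin.succ h), Or.inr (eq_neg_of_add_eq_zero_left ?_)⟩
  have hsplit := sum_add_sum_compl T e
  rw [sum_e, ← insert_erase h0, sum_insert (notMem_erase 0 _), hTab, sum_pair hab,
    sum_insert (by simp [hij.ne, (hij.trans hjk).ne]), sum_pair hjk.ne] at hsplit
  rw [edgeVec, ← hsplit]
  abel

def mod3Lattice : Submodule ℤ (Fin 6 → ℚ) where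
  carrier := {x | ∃ a : Fin 6 → ℤ, (3 : ℤ) ∣ ∑ i, a i ∧ x = ∑ i, (a i : ℚ) • e i}
  add_mem' := by
    rintro _ _ ⟨a, ha, rfl⟩ ⟨b, hb, rfl⟩
    exact ⟨a + b, by simpa [sum_add_distrib] using dvd_add ha hb,
      by simp [add_smul, sum_add_distrib]⟩
  zero_mem' := ⟨0, by simp, by simp⟩
  smul_mem' := by
    rintro n _ ⟨a, ha, rfl⟩
    exact ⟨n • a, by simpa [← mul_sum] using dvd_mul_of_dvd_right ha n, by
      simp only [Pi.smul_apply, smul_eq_mul, Int.cast_mul, mul_smul, smul_sum,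
        Int.cast_smul_eq_zsmul]⟩

theorem add_add_mem_mod3Lattice (i j k : Fin 6) : e i + e j + e k ∈ mod3Lattice :=
  ⟨Pi.single i 1 + Pi.single j 1 + Pi.single k 1, ⟨1, by simp [sum_add_distrib]⟩, by
    simp [add_smul, sum_add_distrib, Pi.single_apply]⟩

theorem mod3Lattice_le {S : Submodule ℤ (Fin 6 → ℚ)} (hS : ∀ x y, edgeVec x y ∈ S) :
    mod3Lattice ≤ S := by
  have h3 : (3 : ℤ) • e 0 ∈ S := by
    have : ∑ y, edgeVec y y = (3 : ℤ) • e 0 := by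
      simp only [edgeVec, sum_add_distrib, sum_e_succ, sum_const, card_univ, Fintype.card_fin]
      module
    exact this ▸ S.sum_mem fun y _ => hS y y
  have hdiff : ∀ i, e i - e 0 ∈ S := by
    refine Fin.cases (by simp) fun y => ?_
    have : (3 : ℤ) • edgeVec y y - ∑ z, edgeVec y z = e y.succ - e 0 := by
      simp only [edgeVec, sum_add_distrib, sum_e_succ, sum_const, card_univ, Fintype.card_fin]
      module
    exact this ▸ S.sub_mem (S.smul_mem 3 (hS y y)) (S.sum_mem fun z _ => hS y z)
  rintro _ ⟨a, ⟨m, hm⟩, rfl⟩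
  have : ∑ i, (a i : ℚ) • e i = ∑ i, a i • (e i - e 0) + m • (3 : ℤ) • e 0 := by
    simp only [smul_sub, sum_sub_distrib, ← sum_smul, hm, Int.cast_smul_eq_zsmul, smul_smul]
    rw [mul_comm]
    abel
  rw [this]
  exact S.add_mem (S.sum_mem fun i _ => S.smul_mem _ (hdiff i)) (S.smul_mem _ h3)

noncomputable def edgeFunctional (φ : Fin 5 → ℚ) : (Fin 6 → ℚ) →ₗ[ℚ] ℚ :=
  Fintype.linearCombination ℚ (Fin.cons (∑ x, φ x) φ : Fin 6 → ℚ)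

theorem edgeFunctional_e (φ : Fin 5 → ℚ) (i : Fin 6) :
    edgeFunctional φ (e i) = (Fin.cons (∑ x, φ x) φ : Fin 6 → ℚ) i - (∑ x, φ x) / 3 := by
  simp [edgeFunctional, Fintype.linearCombination_apply, e, sub_mul, sum_sub_distrib,
    Fin.sum_univ_succ, ← mul_sum]
  ring

theorem edgeFunctional_edgeVec (φ : Fin 5 → ℚ) (x y : Fin 5) :
    edgeFunctional φ (edgeVec x y) = φ x + φ y := by
  simp only [edgeVec, map_add, edgeFunctional_e, Fin.cons_zero, Fin.cons_succ]
  ring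

noncomputable def coordSum : (Fin 6 → ℚ) →ₗ[ℚ] ℚ := Fintype.linearCombination ℚ fun _ => 1

theorem coordSum_e (i : Fin 6) : coordSum (e i) = 0 := by
  simp [coordSum, Fintype.linearCombination_apply, e, sum_sub_distrib]

theorem coordSum_edgeVec (x y : Fin 5) : coordSum (edgeVec x y) = 0 := by
  simp [edgeVec, coordSum_e]

theorem not_linearIndependent_of_edgeFunctional {v : Fin 5 → Fin 6 → ℚ} {φ : Fin 5 → ℚ}
    {b : Fin 5} (hb : φ b ≠ 0)
    (hv : ∀ l, ∃ x y, φ x + φ y = 0 ∧ (v l = edgeVec x y ∨ v l = -edgeVec x y)) :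
    ¬LinearIndependent ℚ v := by
  intro hind
  have hφ : ∀ l, edgeFunctional φ (v l) = 0 := by
    intro l
    rcases hv l with ⟨x, y, hxy, h | h⟩ <;> simp [h, edgeFunctional_edgeVec, hxy]
  have hsum : ∀ l, coordSum (v l) = 0 := by
    intro l
    rcases hv l with ⟨x, y, -, h | h⟩ <;> simp [h, coordSum_edgeVec]
  have hind₇ := (hind.finCons (notMem_span_of_map_eq_zero _ hφ (x := edgeVec b b)
    (by simpa [edgeFunctional_edgeVec, ← two_mul] using hb))).finCons
    (notMem_span_of_map_eq_zero coordSum (x := fun _ => 1)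
      (Fin.cases (coordSum_edgeVec b b) hsum) (by simp [coordSum, Fintype.linearCombination_apply]))
  simpa using hind₇.fintype_card_le_finrank

def edgeGraph (v : Fin 5 → Fin 6 → ℚ) : SimpleGraph (Fin 5) :=
  SimpleGraph.fromRel fun x y => ∃ l, v l = edgeVec x y ∨ v l = -edgeVec x y

section EdgeGraph

variable {v : Fin 5 → Fin 6 → ℚ}

theorem exists_adj_edgeGraph (hv : ∀ l, ∃ i j k : Fin 6, i < j ∧ j < k ∧ v l = e i + e j + e k)
    (l : Fin 5) : ∃ x y, (edgeGraph v).Adj x y ∧ (v l = edgeVec x y ∨ v l = -edgeVec x y) := by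
  obtain ⟨i, j, k, hij, hjk, hl⟩ := hv l
  obtain ⟨x, y, hxy, h⟩ := exists_edgeVec_eq i j k hij hjk
  exact ⟨x, y, ⟨hxy, Or.inl ⟨l, hl ▸ h⟩⟩, hl ▸ h⟩

theorem edgeVec_mem_span_of_adj {x y : Fin 5} (h : (edgeGraph v).Adj x y) :
    edgeVec x y ∈ Submodule.span ℤ (Set.range v) := by
  have hedge : ∀ x y, (∃ l, v l = edgeVec x y ∨ v l = -edgeVec x y) →
      edgeVec x y ∈ Submodule.span ℤ (Set.range v) := by
    rintro x y ⟨l, hl | hl⟩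
    · exact hl ▸ Submodule.subset_span ⟨l, rfl⟩
    · exact neg_neg (edgeVec x y) ▸ hl ▸ Submodule.neg_mem _ (Submodule.subset_span ⟨l, rfl⟩)
  rcases h with ⟨-, h | h⟩
  · exact hedge x y h
  · exact edgeVec_comm y x ▸ hedge y x h

theorem exists_odd_closed_walk
    (hv : ∀ l, ∃ i j k : Fin 6, i < j ∧ j < k ∧ v l = e i + e j + e k)
    (hind : LinearIndependent ℚ v) (b : Fin 5) : ∃ p : (edgeGraph v).Walk b b, Odd p.length := by
  by_contra! h
  refine not_linearIndependent_of_edgeFunctional (φ := (edgeGraph v).parityPotential b) (b := b)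
    (by simp [parityPotential_self h]) (fun l => ?_) hind
  obtain ⟨x, y, hxy, hl⟩ := exists_adj_edgeGraph hv l
  exact ⟨x, y, parityPotential_add_eq_zero hxy, hl⟩

theorem edgeVec_mem_span (hv : ∀ l, ∃ i j k : Fin 6, i < j ∧ j < k ∧ v l = e i + e j + e k)
    (hind : LinearIndependent ℚ v) (x y : Fin 5) :
    edgeVec x y ∈ Submodule.span ℤ (Set.range v) := by
  obtain ⟨q⟩ := preconnected_of_card_lt_six (by simp) (exists_odd_closed_walk hv hind) x y
  obtain ⟨p, hp⟩ := exists_odd_closed_walk hv hind x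
  have hodd := fun r : (edgeGraph v).Walk x y =>
    (r.sub_mem_of_even_and_add_mem_of_odd (fun z => e z.succ) (e 0)
      fun _ _ => edgeVec_mem_span_of_adj).2
  rcases Nat.even_or_odd q.length with hq | hq
  · exact hodd (p.append q) (by simpa [Walk.length_append] using hp.add_even hq)
  · exact hodd q hq

theorem span_le_mod3Lattice (hv : ∀ l, ∃ i j k : Fin 6, i < j ∧ j < k ∧ v l = e i + e j + e k) :
    Submodule.span ℤ (Set.range v) ≤ mod3Lattice :=
  Submodule.span_le.2 <| Set.range_subset_iff.2 fun l => by
    obtain ⟨i, j, k, -, -, hl⟩ := hv l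
    exact hl ▸ add_add_mem_mod3Lattice i j k

end EdgeGraph

/-- For any 5 linearly independent vectors `v₁, ..., v₅` from
`M = {eᵢ + eⱼ + e_k : 1 ≤ i < j < k ≤ 6}`, the subgroup `ℤ(v₁,...,v₅)` equals
`{∑ xᵢeᵢ : xᵢ ∈ ℤ, ∑ xᵢ ≡ 0 (mod 3)}`. -/
theorem zspan_eq_mod3_lattice (v : Fin 5 → (Fin 6 → ℚ))
    (hv : ∀ l, ∃ i j k : Fin 6, i < j ∧ j < k ∧ v l = e i + e j + e k)
    (hind : LinearIndependent ℚ v) :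
    ∀ x : Fin 6 → ℚ,
      (∃ c : Fin 5 → ℤ, x = ∑ l, (c l : ℚ) • v l) ↔
      (∃ a : Fin 6 → ℤ, (3 : ℤ) ∣ ∑ i, a i ∧ x = ∑ i, (a i : ℚ) • e i) := by
  intro x
  have hspan : Submodule.span ℤ (Set.range v) = mod3Lattice :=
    le_antisymm (span_le_mod3Lattice hv) (mod3Lattice_le (edgeVec_mem_span hv hind))
  change _ ↔ x ∈ mod3Lattice
  rw [← hspan, Submodule.mem_span_range_iff_exists_fun]
  simp_rw [Int.cast_smul_eq_zsmul, eq_comm]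
end

section
/- Every subset of the set {(3/2,−3/2), (1/2,−1/2), (−1/2,1/2), (−3/2,3/2)} ⊂ ℚ² is saturated. -/
/-- A finite set of vectors in `ℚ²` is *saturated* if every vector that is both an
integer combination and a nonnegative-rational combination of its elements is a
nonnegative-integer combination of its elements. -/
def IsSaturatedSet (M : Finset (Fin 2 → ℚ)) : Prop :=
  ∀ x : Fin 2 → ℚ,
    (∃ c : (Fin 2 → ℚ) → ℤ, x = ∑ v ∈ M, (c v : ℚ) • v) →
    (∃ q : (Fin 2 → ℚ) → ℚ, (∀ v ∈ M, 0 ≤ q v) ∧ x = ∑ v ∈ M, q v • v) →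
    ∃ m : (Fin 2 → ℚ) → ℕ, x = ∑ v ∈ M, (m v : ℚ) • v

private lemma vec_ne {a b : ℚ} (h : a ≠ b) (a' b' : ℚ) :
    ![a, a'] ≠ ![b, b'] := by
  intro he; exact h (congrFun he 0)

private lemma sum_ite_single (S : Finset (Fin 2 → ℚ)) {w : Fin 2 → ℚ} (hw : w ∈ S) (k : ℕ) :
    ∑ v ∈ S, (((if v = w then k else 0 : ℕ) : ℚ)) * v 0 = (k : ℚ) * w 0 := by
  rw [Finset.sum_eq_single_of_mem w hw (fun b _ hb => by simp [hb])]
  simp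

private lemma sum_ite_pair (S : Finset (Fin 2 → ℚ)) {w1 w2 : Fin 2 → ℚ}
    (h1 : w1 ∈ S) (h2 : w2 ∈ S) (hne : w1 ≠ w2) (k1 k2 : ℕ) :
    ∑ v ∈ S, (((if v = w1 then k1 else if v = w2 then k2 else 0 : ℕ) : ℚ)) * v 0
      = (k1 : ℚ) * w1 0 + (k2 : ℚ) * w2 0 := by
  rw [← Finset.sum_subset (show ({w1, w2} : Finset (Fin 2 → ℚ)) ⊆ S by
      intro v hv
      rcases Finset.mem_insert.1 hv with rfl | hv
      · exact h1
      · rw [Finset.mem_singleton.1 hv]; exact h2)]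
  · rw [Finset.sum_pair hne]
    simp [hne, hne.symm]
  · intro v _ hv
    have h1' : v ≠ w1 := fun e => hv (by simp [e])
    have h2' : v ≠ w2 := fun e => hv (by simp [e])
    simp [h1', h2']

/-- Every subset of `{(3/2,−3/2), (1/2,−1/2), (−1/2,1/2), (−3/2,3/2)}` is saturated
(the weight system of the `SL(2)`-module `S³k²`). -/
theorem S3k2_all_subsets_saturated (S : Finset (Fin 2 → ℚ))
    (hS : ∀ v ∈ S, v = ![(3:ℚ)/2, -(3:ℚ)/2] ∨ v = ![(1:ℚ)/2, -(1:ℚ)/2] ∨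
      v = ![-(1:ℚ)/2, (1:ℚ)/2] ∨ v = ![-(3:ℚ)/2, (3:ℚ)/2]) :
    IsSaturatedSet S := by
  intro x hcz hq
  obtain ⟨c, hc⟩ := hcz
  obtain ⟨q, hq0, hqx⟩ := hq
  set va : Fin 2 → ℚ := ![(3:ℚ)/2, -(3:ℚ)/2] with hva
  set vb : Fin 2 → ℚ := ![(1:ℚ)/2, -(1:ℚ)/2] with hvb
  set vc : Fin 2 → ℚ := ![-(1:ℚ)/2, (1:ℚ)/2] with hvc
  set vd : Fin 2 → ℚ := ![-(3:ℚ)/2, (3:ℚ)/2] with hvd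
  have hab : va ≠ vb := vec_ne (by norm_num) _ _
  have hac : va ≠ vc := vec_ne (by norm_num) _ _
  have had : va ≠ vd := vec_ne (by norm_num) _ _
  have hbc : vb ≠ vc := vec_ne (by norm_num) _ _
  have hbd : vb ≠ vd := vec_ne (by norm_num) _ _
  have hcd : vc ≠ vd := vec_ne (by norm_num) _ _
  have ha0 : va 0 = 3/2 := by rw [hva]; norm_num
  have hb0 : vb 0 = 1/2 := by rw [hvb]; norm_num
  have hc0 : vc 0 = -(1/2) := by rw [hvc]; norm_num
  have hd0 : vd 0 = -(3/2) := by rw [hvd]; norm_num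
  have hneg : ∀ v ∈ S, v 1 = -v 0 := by
    intro v hv
    rcases hS v hv with rfl | rfl | rfl | rfl <;>
      simp only [hva, hvb, hvc, hvd] <;> norm_num
  have hx0 : x 0 = ∑ v ∈ S, (c v : ℚ) * v 0 := by
    rw [hc]; simp [Finset.sum_apply]
  have hqx0 : x 0 = ∑ v ∈ S, q v * v 0 := by
    rw [hqx]; simp [Finset.sum_apply]
  have hx1 : x 1 = -x 0 := by
    rw [hx0, hc]
    simp only [Finset.sum_apply, Pi.smul_apply, smul_eq_mul, ← Finset.sum_neg_distrib]
    exact Finset.sum_congr rfl fun v hv => by rw [hneg v hv]; ring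
  -- reduce to a one-dimensional problem
  suffices h : ∃ m : (Fin 2 → ℚ) → ℕ, ∑ v ∈ S, (m v : ℚ) * v 0 = x 0 by
    obtain ⟨m, hm⟩ := h
    refine ⟨m, funext fun i => ?_⟩
    have hsum : (∑ v ∈ S, ((m v : ℚ)) • v) i = ∑ v ∈ S, (m v : ℚ) * v i := by
      simp [Finset.sum_apply]
    rw [hsum]
    fin_cases i
    · exact hm.symm
    · show x 1 = ∑ v ∈ S, (m v : ℚ) * v 1
      rw [hx1, ← hm, ← Finset.sum_neg_distrib]
      exact Finset.sum_congr rfl fun v hv => by rw [hneg v hv]; ring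
  -- x 0 is half an integer
  obtain ⟨n, hn⟩ : ∃ n : ℤ, x 0 = (n : ℚ) / 2 := by
    refine ⟨∑ v ∈ S, c v * (if v = va then 3 else if v = vb then 1 else
      if v = vc then -1 else -3), ?_⟩
    rw [hx0, Int.cast_sum, Finset.sum_div]
    refine Finset.sum_congr rfl fun v hv => ?_
    rcases hS v hv with rfl | rfl | rfl | rfl
    · rw [if_pos rfl, ha0]; push_cast; ring
    · rw [if_neg hab.symm, if_pos rfl, hb0]; push_cast; ring
    · rw [if_neg hac.symm, if_neg hbc.symm, if_pos rfl, hc0]; push_cast; ring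
    · rw [if_neg had.symm, if_neg hbd.symm, if_neg hcd.symm, hd0]; push_cast; ring
  -- if only the ±3/2 vectors occur, x 0 is a multiple of 3/2
  have h32 : vb ∉ S → vc ∉ S → ∃ k : ℤ, x 0 = (k : ℚ) * (3/2) := by
    intro hbS hcS
    refine ⟨∑ v ∈ S, c v * (if v = va then 1 else -1), ?_⟩
    rw [hx0, Int.cast_sum, Finset.sum_mul]
    refine Finset.sum_congr rfl fun v hv => ?_
    rcases hS v hv with rfl | rfl | rfl | rfl
    · rw [if_pos rfl, ha0]; push_cast; ring
    · exact absurd hv hbS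
    · exact absurd hv hcS
    · rw [if_neg had.symm, hd0]; push_cast; ring
  rcases lt_trichotomy (x 0) 0 with hlt | heq | hgt
  · -- negative case: vc ∈ S or vd ∈ S
    have hex : ∃ v ∈ S, v 0 < 0 := by
      by_contra hcon
      push_neg at hcon
      have hnn : 0 ≤ ∑ v ∈ S, q v * v 0 :=
        Finset.sum_nonneg fun v hv => mul_nonneg (hq0 v hv) (hcon v hv)
      rw [← hqx0] at hnn; linarith
    obtain ⟨v, hv, hv0⟩ := hex
    have hncd : vc ∈ S ∨ vd ∈ S := by
      rcases hS v hv with rfl | rfl | rfl | rfl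
      · rw [ha0] at hv0; norm_num at hv0
      · rw [hb0] at hv0; norm_num at hv0
      · exact Or.inl hv
      · exact Or.inr hv
    have hnneg : (n : ℚ) < 0 := by rw [hn] at hlt; linarith
    have hnneg' : n < 0 := by exact_mod_cast hnneg
    by_cases hcS : vc ∈ S
    · refine ⟨fun v => if v = vc then (-n).toNat else 0, ?_⟩
      rw [sum_ite_single S hcS, hc0, hn]
      have : (((-n).toNat : ℚ)) = -(n : ℚ) := by
        exact_mod_cast Int.toNat_of_nonneg (by omega : (0:ℤ) ≤ -n)
      rw [this]; ring
    · have hdS : vd ∈ S := by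
        rcases hncd with h | h
        · exact absurd h hcS
        · exact h
      by_cases hbS : vb ∈ S
      · refine ⟨fun v => if v = vb then (-2*n).toNat else if v = vd then (-n).toNat else 0, ?_⟩
        rw [sum_ite_pair S hbS hdS hbd, hb0, hd0, hn]
        have h1 : (((-2*n).toNat : ℚ)) = -2*(n : ℚ) := by
          exact_mod_cast Int.toNat_of_nonneg (by omega : (0:ℤ) ≤ -2*n)
        have h2 : (((-n).toNat : ℚ)) = -(n : ℚ) := by
          exact_mod_cast Int.toNat_of_nonneg (by omega : (0:ℤ) ≤ -n)
        rw [h1, h2]; ring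
      · obtain ⟨k, hk⟩ := h32 hbS hcS
        have hkneg : (k : ℚ) < 0 := by rw [hk] at hlt; linarith
        have hkneg' : k < 0 := by exact_mod_cast hkneg
        refine ⟨fun v => if v = vd then (-k).toNat else 0, ?_⟩
        rw [sum_ite_single S hdS, hd0, hk]
        have : (((-k).toNat : ℚ)) = -(k : ℚ) := by
          exact_mod_cast Int.toNat_of_nonneg (by omega : (0:ℤ) ≤ -k)
        rw [this]; ring
  · exact ⟨fun _ => 0, by simp [heq]⟩
  · -- positive case: va ∈ S or vb ∈ S
    have hex : ∃ v ∈ S, 0 < v 0 := by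
      by_contra hcon
      push_neg at hcon
      have hnp : ∑ v ∈ S, q v * v 0 ≤ 0 :=
        Finset.sum_nonpos fun v hv => mul_nonpos_of_nonneg_of_nonpos (hq0 v hv) (hcon v hv)
      rw [← hqx0] at hnp; linarith
    obtain ⟨v, hv, hv0⟩ := hex
    have hnab : va ∈ S ∨ vb ∈ S := by
      rcases hS v hv with rfl | rfl | rfl | rfl
      · exact Or.inl hv
      · exact Or.inr hv
      · rw [hc0] at hv0; norm_num at hv0
      · rw [hd0] at hv0; norm_num at hv0
    have hnpos : (0:ℚ) < (n : ℚ) := by rw [hn] at hgt; linarith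
    have hnpos' : 0 < n := by exact_mod_cast hnpos
    by_cases hbS : vb ∈ S
    · refine ⟨fun v => if v = vb then n.toNat else 0, ?_⟩
      rw [sum_ite_single S hbS, hb0, hn]
      have : ((n.toNat : ℚ)) = (n : ℚ) := by
        exact_mod_cast Int.toNat_of_nonneg (by omega : (0:ℤ) ≤ n)
      rw [this]; ring
    · have haS : va ∈ S := by
        rcases hnab with h | h
        · exact h
        · exact absurd h hbS
      by_cases hcS : vc ∈ S
      · refine ⟨fun v => if v = va then n.toNat else if v = vc then (2*n).toNat else 0, ?_⟩
        rw [sum_ite_pair S haS hcS hac, ha0, hc0, hn]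
        have h1 : ((n.toNat : ℚ)) = (n : ℚ) := by
          exact_mod_cast Int.toNat_of_nonneg (by omega : (0:ℤ) ≤ n)
        have h2 : (((2*n).toNat : ℚ)) = 2*(n : ℚ) := by
          exact_mod_cast Int.toNat_of_nonneg (by omega : (0:ℤ) ≤ 2*n)
        rw [h1, h2]; ring
      · obtain ⟨k, hk⟩ := h32 hbS hcS
        have hkpos : (0:ℚ) < (k : ℚ) := by rw [hk] at hgt; linarith
        have hkpos' : 0 < k := by exact_mod_cast hkpos
        refine ⟨fun v => if v = va then k.toNat else 0, ?_⟩
        rw [sum_ite_single S haS, ha0, hk]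
        have : ((k.toNat : ℚ)) = (k : ℚ) := by
          exact_mod_cast Int.toNat_of_nonneg (by omega : (0:ℤ) ≤ k)
        rw [this]
end

section
/- Every subset of the set {(2,−2), (1,−1), (0,0), (−1,1), (−2,2)} ⊂ ℤ² is saturated. -/
lemma aux_sum_int {α} (S : Finset α) (f : α → ℚ) (h : ∀ v ∈ S, ∃ n : ℤ, f v = n) :
    ∃ n : ℤ, ∑ v ∈ S, f v = n := by
  classical
  induction S using Finset.induction_on with
  | empty => exact ⟨0, by simp⟩
  | @insert a s ha ih =>
    obtain ⟨n, hn⟩ := ih (fun v hv => h v (Finset.mem_insert_of_mem hv))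
    obtain ⟨m, hm⟩ := h _ (Finset.mem_insert_self _ _)
    exact ⟨m + n, by simp [Finset.sum_insert ha, hn, hm]⟩

lemma aux_sum_single {α} [DecidableEq α] (S : Finset α) (a : α) (ha : a ∈ S)
    (g : α → ℚ) (N : ℕ) :
    ∑ v ∈ S, ((if v = a then N else 0 : ℕ) : ℚ) * g v = N * g a := by
  have h1 : ∀ v ∈ S, ((if v = a then N else 0 : ℕ) : ℚ) * g v
      = (if v = a then (N : ℚ) * g v else 0) := by
    intro v _; split_ifs <;> simp
  rw [Finset.sum_congr rfl h1, Finset.sum_ite_eq' S a (fun v => (N:ℚ) * g v), if_pos ha]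

lemma aux_sum_pair {α} [DecidableEq α] (S : Finset α) (a b : α) (hab : a ≠ b)
    (ha : a ∈ S) (hb : b ∈ S) (g : α → ℚ) (N M : ℕ) :
    ∑ v ∈ S, ((if v = a then N else if v = b then M else 0 : ℕ) : ℚ) * g v
      = N * g a + M * g b := by
  have h1 : ∀ v ∈ S, ((if v = a then N else if v = b then M else 0 : ℕ) : ℚ) * g v
      = (if v = a then (N : ℚ) * g v else 0) + (if v = b then (M : ℚ) * g v else 0) := by
    intro v _
    split_ifs with h1 h2 h2 <;> simp_all
  rw [Finset.sum_congr rfl h1, Finset.sum_add_distrib,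
    Finset.sum_ite_eq' S a (fun v => (N:ℚ) * g v),
    Finset.sum_ite_eq' S b (fun v => (M:ℚ) * g v), if_pos ha, if_pos hb]

lemma aux_cast_natAbs (z : ℤ) (hz : 0 ≤ z) : ((z.natAbs : ℕ) : ℚ) = (z : ℚ) := by
  lift z to ℕ using hz
  simp

/-- Every subset of `{(2,−2), (1,−1), (0,0), (−1,1), (−2,2)}` is saturated
(the weight system of the `SL(2)`-module `S⁴k²`). -/
theorem S4k2_all_subsets_saturated (S : Finset (Fin 2 → ℚ))
    (hS : ∀ v ∈ S, v = ![(2:ℚ), -2] ∨ v = ![(1:ℚ), -1] ∨ v = ![(0:ℚ), 0] ∨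
      v = ![(-1:ℚ), 1] ∨ v = ![(-2:ℚ), 2]) :
    IsSaturatedSet S := by
  classical
  intro x hc' hq'
  obtain ⟨c, hc⟩ := hc'
  obtain ⟨q, hq0, hq⟩ := hq'
  -- every element of S is (v 0) • ![1,-1]
  have hvu : ∀ v ∈ S, v = v 0 • ![(1:ℚ), -1] := by
    intro v hv
    rcases hS v hv with h | h | h | h | h <;> subst h <;>
      · funext i; fin_cases i <;> norm_num
  -- general sum formula
  have hsum : ∀ f : (Fin 2 → ℚ) → ℚ,
      ∑ v ∈ S, f v • v = (∑ v ∈ S, f v * v 0) • ![(1:ℚ), -1] := by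
    intro f
    rw [Finset.sum_smul]
    refine Finset.sum_congr rfl fun v hv => ?_
    rw [mul_smul, ← hvu v hv]
  -- x = t • u with t both value of integer and rational sums
  have hx1 : x = (∑ v ∈ S, (c v : ℚ) * v 0) • ![(1:ℚ), -1] := by rw [hc, hsum]
  have hx2 : x = (∑ v ∈ S, q v * v 0) • ![(1:ℚ), -1] := by rw [hq, hsum]
  set t : ℚ := ∑ v ∈ S, (c v : ℚ) * v 0 with ht
  have htq : (∑ v ∈ S, q v * v 0) = t := by
    have h := hx2.symm.trans hx1
    have h0 := congrFun h 0
    simpa using h0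
  -- t is an integer
  obtain ⟨n, hn⟩ : ∃ n : ℤ, t = n := by
    apply aux_sum_int
    intro v hv
    rcases hS v hv with h | h | h | h | h <;> subst h
    · exact ⟨2 * c ![(2:ℚ), -2], by push_cast; norm_num; ring⟩
    · exact ⟨c ![(1:ℚ), -1], by push_cast; norm_num⟩
    · exact ⟨0, by norm_num⟩
    · exact ⟨-c ![(-1:ℚ), 1], by push_cast; norm_num⟩
    · exact ⟨-(2 * c ![(-2:ℚ), 2]), by push_cast; norm_num; ring⟩
  -- it suffices to realise t as a nonneg-integer combination of first coordinates
  suffices hsuf : ∃ m : (Fin 2 → ℚ) → ℕ, (∑ v ∈ S, (m v : ℚ) * v 0) = t by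
    obtain ⟨m, hm⟩ := hsuf
    exact ⟨m, by rw [hsum, hm, ← hx1]⟩
  rcases lt_trichotomy n 0 with hneg | hzero | hpos
  · -- t < 0 : some vector with negative first coordinate is present
    have htneg : (∑ v ∈ S, q v * v 0) < ∑ v ∈ S, (0:ℚ) := by
      rw [htq, Finset.sum_const_zero, hn]
      exact_mod_cast hneg
    obtain ⟨v, hv, hvlt⟩ := Finset.exists_lt_of_sum_lt htneg
    have hv0neg : v 0 < 0 := by
      by_contra hle
      push_neg at hle
      exact absurd (mul_nonneg (hq0 v hv) hle) (not_le.mpr hvlt)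
    by_cases hw1 : ![(-1:ℚ), 1] ∈ S
    · refine ⟨fun w => if w = ![(-1:ℚ), 1] then (-n).natAbs else 0, ?_⟩
      rw [aux_sum_single S _ hw1, aux_cast_natAbs _ (by omega)]
      push_cast
      rw [hn]; norm_num
    · have hw2 : ![(-2:ℚ), 2] ∈ S := by
        rcases hS v hv with h | h | h | h | h
        · rw [h] at hv0neg; norm_num at hv0neg
        · rw [h] at hv0neg; norm_num at hv0neg
        · rw [h] at hv0neg; norm_num at hv0neg
        · rw [h] at hv; exact absurd hv hw1
        · rw [h] at hv; exact hv
      by_cases hb1 : ![(1:ℚ), -1] ∈ S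
      · refine ⟨fun w => if w = ![(-2:ℚ), 2] then (-n).natAbs
          else if w = ![(1:ℚ), -1] then (-n).natAbs else 0, ?_⟩
        have hne : ![(-2:ℚ), 2] ≠ ![(1:ℚ), -1] := by
          intro h; have := congrFun h 0; norm_num at this
        rw [aux_sum_pair S _ _ hne hw2 hb1, aux_cast_natAbs _ (by omega)]
        push_cast
        rw [hn]; norm_num; ring
      · -- all first coordinates even: t/2 is an integer
        obtain ⟨k, hk⟩ : ∃ k : ℤ, (∑ v ∈ S, (c v : ℚ) * (v 0 / 2)) = k := by
          apply aux_sum_int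
          intro w hw
          rcases hS w hw with h | h | h | h | h <;> subst h
          · exact ⟨c ![(2:ℚ), -2], by push_cast; norm_num⟩
          · exact absurd hw hb1
          · exact ⟨0, by norm_num⟩
          · exact absurd hw hw1
          · exact ⟨-c ![(-2:ℚ), 2], by push_cast; norm_num⟩
        have hk2 : t = 2 * k := by
          rw [ht, ← hk, Finset.mul_sum]
          refine Finset.sum_congr rfl fun w _ => by ring
        have hkneg : k < 0 := by
          have h2 : (2 * k : ℤ) = n := by
            have : ((2 * k : ℤ) : ℚ) = (n : ℚ) := by push_cast; rw [← hk2, hn]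
            exact_mod_cast this
          omega
        refine ⟨fun w => if w = ![(-2:ℚ), 2] then (-k).natAbs else 0, ?_⟩
        rw [aux_sum_single S _ hw2, aux_cast_natAbs _ (by omega)]
        rw [hk2]; push_cast; norm_num; ring
  · exact ⟨fun _ => 0, by simp [hn, hzero]⟩
  · -- t > 0 : some vector with positive first coordinate is present
    have htpos : (∑ v ∈ S, (0:ℚ)) < ∑ v ∈ S, q v * v 0 := by
      rw [htq, Finset.sum_const_zero, hn]
      exact_mod_cast hpos
    obtain ⟨v, hv, hvlt⟩ := Finset.exists_lt_of_sum_lt htpos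
    have hv0pos : 0 < v 0 := by
      by_contra hle
      push_neg at hle
      exact absurd (mul_nonpos_of_nonneg_of_nonpos (hq0 v hv) hle) (not_le.mpr hvlt)
    by_cases hb1 : ![(1:ℚ), -1] ∈ S
    · refine ⟨fun w => if w = ![(1:ℚ), -1] then n.natAbs else 0, ?_⟩
      rw [aux_sum_single S _ hb1, aux_cast_natAbs _ (by omega)]
      rw [hn]; norm_num
    · have hb2 : ![(2:ℚ), -2] ∈ S := by
        rcases hS v hv with h | h | h | h | h
        · rw [h] at hv; exact hv
        · rw [h] at hv; exact absurd hv hb1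
        · rw [h] at hv0pos; norm_num at hv0pos
        · rw [h] at hv0pos; norm_num at hv0pos
        · rw [h] at hv0pos; norm_num at hv0pos
      by_cases hw1 : ![(-1:ℚ), 1] ∈ S
      · refine ⟨fun w => if w = ![(2:ℚ), -2] then n.natAbs
          else if w = ![(-1:ℚ), 1] then n.natAbs else 0, ?_⟩
        have hne : ![(2:ℚ), -2] ≠ ![(-1:ℚ), 1] := by
          intro h; have := congrFun h 0; norm_num at this
        rw [aux_sum_pair S _ _ hne hb2 hw1, aux_cast_natAbs _ (by omega)]
        rw [hn]; norm_num; ring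
      · obtain ⟨k, hk⟩ : ∃ k : ℤ, (∑ v ∈ S, (c v : ℚ) * (v 0 / 2)) = k := by
          apply aux_sum_int
          intro w hw
          rcases hS w hw with h | h | h | h | h <;> subst h
          · exact ⟨c ![(2:ℚ), -2], by push_cast; norm_num⟩
          · exact absurd hw hb1
          · exact ⟨0, by norm_num⟩
          · exact absurd hw hw1
          · exact ⟨-c ![(-2:ℚ), 2], by push_cast; norm_num⟩
        have hk2 : t = 2 * k := by
          rw [ht, ← hk, Finset.mul_sum]
          refine Finset.sum_congr rfl fun w _ => by ring
        have hkpos : 0 < k := by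
          have h2 : (2 * k : ℤ) = n := by
            have : ((2 * k : ℤ) : ℚ) = (n : ℚ) := by push_cast; rw [← hk2, hn]
            exact_mod_cast this
          omega
        refine ⟨fun w => if w = ![(2:ℚ), -2] then k.natAbs else 0, ?_⟩
        rw [aux_sum_single S _ hb2, aux_cast_natAbs _ (by omega)]
        rw [hk2]; norm_num; ring
end
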